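/- Let G be a graph on n vertices, v a vertex with neighborhood N_G(v), A ∈ S(G−v) a witness for mr(G−v), and B the bordered matrix [[A, Aw],[wᵀA, wᵀAw]]. Then B is a witness of mr(G) if and only if (1) w lies in the null space of the submatrix A[L_v \ N_G(v), L_v] of A consisting of the rows indexed by non-neighbors of v, and (2) (Aw)_i ≠ 0 for every i ∈ N_G(v). -/

import Mathlib

open Matrix

/-- The set of real symmetric matrices whose off-diagonal zero/nonzero
pattern matches the edges of the graph `G`. -/
def SG {V : Type*} (G : SimpleGraph V) : Set (Matrix V V ℝ) :=
  {A | A.IsSymm ∧ ∀ i j : V, i ≠ j → (A i j ≠ 0 ↔ G.Adj i j)}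

/-- Minimum rank of a graph. -/
noncomputable def minRank {V : Type*} [Fintype V] (G : SimpleGraph V) : ℕ :=
  sInf {r | ∃ A ∈ SG G, A.rank = r}

/-- The graph obtained from `G` by deleting the vertex `v`. -/
def deleteVert {V : Type*} (G : SimpleGraph V) (v : V) :
    SimpleGraph {x : V // x ≠ v} where
  Adj a b := G.Adj a.val b.val
  symm := ⟨fun _ _ h => G.symm.symm _ _ h⟩
  loopless := ⟨fun a h => G.loopless.irrefl a.val h⟩

noncomputable instance {V : Type*} [Finite V] (v : V) :
    Fintype {x : V // x ≠ v} := Fintype.ofFinite _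

/-- The bordered matrix `B = [[A, Aw],[wᵀA, wᵀAw]]`, with rows and columns
indexed by `V`; the new row/column is the one indexed by `v`. -/
noncomputable def border {V : Type*} [Fintype V] [DecidableEq V] (v : V)
    (A : Matrix {x : V // x ≠ v} {x : V // x ≠ v} ℝ) (w : {x : V // x ≠ v} → ℝ) :
    Matrix V V ℝ :=
  Matrix.of fun i j =>
    if hi : i = v then
      (if hj : j = v then w ⬝ᵥ (A *ᵥ w) else (w ᵥ* A) ⟨j, hj⟩)
    else
      (if hj : j = v then (A *ᵥ w) ⟨i, hi⟩ else A ⟨i, hi⟩ ⟨j, hj⟩)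

/-!
Write `B = E A Eᵀ`, where `E` stacks the identity on `L_v` and the extra row `wᵀ`. Then `B` is
symmetric with `A`, and `rank B = rank A` because `A` is also a principal submatrix of `B`.
Off the row and column `v` the pattern of `B` is that of `A`; on them it is the support of
`Aw`, so `B ∈ S(G)` exactly when the support of `Aw` is `N_G(v)`. In that case
`mr(G - v) ≤ mr(G) ≤ rank B = rank A = mr(G - v)`.
-/

noncomputable def borderLift {V : Type*} [DecidableEq V] (v : V) (w : {x : V // x ≠ v} → ℝ) :
    Matrix V {x : V // x ≠ v} ℝ :=
  Matrix.of fun i k =>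
    if hi : i = v then w k else if (⟨i, hi⟩ : {x : V // x ≠ v}) = k then 1 else 0

section Border

variable {V : Type*} [Fintype V] [DecidableEq V] (v : V)
  (A : Matrix {x : V // x ≠ v} {x : V // x ≠ v} ℝ) (w : {x : V // x ≠ v} → ℝ)

theorem border_eq_borderLift_mul :
    border v A w = borderLift v w * A * (borderLift v w)ᵀ := by
  ext i j
  by_cases hi : i = v <;> by_cases hj : j = v
  · simpa [border, borderLift, hi, hj, Matrix.mul_apply, Matrix.mulVec, dotProduct,
      Finset.mul_sum, Finset.sum_mul, mul_assoc] using Finset.sum_comm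
  all_goals simp [border, borderLift, hi, hj, Matrix.mul_apply, Matrix.mulVec,
      Matrix.vecMul, dotProduct]

theorem submatrix_val_border :
    (border v A w).submatrix Subtype.val Subtype.val = A := by
  ext i j
  simp [border, i.prop, j.prop]

theorem rank_border : (border v A w).rank = A.rank := by
  apply le_antisymm
  · rw [border_eq_borderLift_mul]
    exact (Matrix.rank_mul_le_left _ _).trans (Matrix.rank_mul_le_right _ _)
  · conv_lhs => rw [← submatrix_val_border v A w]
    exact Matrix.rank_submatrix_le _ _ _

theorem border_isSymm (hA : A.IsSymm) : (border v A w).IsSymm := by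
  rw [border_eq_borderLift_mul, Matrix.IsSymm, Matrix.transpose_mul, Matrix.transpose_mul,
    Matrix.transpose_transpose, hA.eq, Matrix.mul_assoc]

theorem border_mem_SG_iff {G : SimpleGraph V} (hA : A ∈ SG (deleteVert G v)) :
    border v A w ∈ SG G ↔ ∀ x : {x : V // x ≠ v}, ((A *ᵥ w) x ≠ 0 ↔ G.Adj v x) := by
  have hcol (x : {x : V // x ≠ v}) : border v A w x v = (A *ᵥ w) x := by simp [border, x.prop]
  constructor
  · rintro ⟨-, hpat⟩ x
    rw [← hcol, G.adj_comm]
    exact hpat x v x.prop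
  · intro hvw
    have hB := border_isSymm v A w hA.1
    refine ⟨hB, fun i j hij => ?_⟩
    rcases eq_or_ne i v with rfl | hi
    · rw [← hB.apply, hcol ⟨j, hij.symm⟩]
      exact hvw _
    rcases eq_or_ne j v with rfl | hj
    · rw [hcol ⟨i, hi⟩, G.adj_comm]
      exact hvw _
    have hentry : border v A w i j = A ⟨i, hi⟩ ⟨j, hj⟩ := by simp [border, hi, hj]
    rw [hentry]
    exact hA.2 ⟨i, hi⟩ ⟨j, hj⟩ (fun h => hij (congrArg Subtype.val h))

end Border

theorem submatrix_val_mem_SG_deleteVert {V : Type*} {G : SimpleGraph V} {M : Matrix V V ℝ}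
    (hM : M ∈ SG G) (v : V) :
    M.submatrix Subtype.val Subtype.val ∈ SG (deleteVert G v) :=
  ⟨hM.1.submatrix _, fun i j hij => hM.2 i j (Subtype.val_injective.ne hij)⟩

theorem minRank_le_rank {V : Type*} [Fintype V] {G : SimpleGraph V} {A : Matrix V V ℝ}
    (hA : A ∈ SG G) : minRank G ≤ A.rank :=
  Nat.sInf_le ⟨A, hA, rfl⟩

theorem exists_mem_SG_rank_eq_minRank {V : Type*} [Fintype V] (G : SimpleGraph V) :
    ∃ A ∈ SG G, A.rank = minRank G := by
  classical
  have hadj : G.adjMatrix ℝ ∈ SG G :=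
    ⟨G.isSymm_adjMatrix, fun i j _ => by simp [SimpleGraph.adjMatrix_apply]⟩
  exact Nat.sInf_mem (s := {r | ∃ A ∈ SG G, A.rank = r}) ⟨_, _, hadj, rfl⟩

theorem minRank_deleteVert_le {V : Type*} [Fintype V] (G : SimpleGraph V) (v : V) :
    minRank (deleteVert G v) ≤ minRank G := by
  obtain ⟨M, hM, hrank⟩ := exists_mem_SG_rank_eq_minRank G
  calc minRank (deleteVert G v) ≤ (M.submatrix Subtype.val Subtype.val).rank :=
        minRank_le_rank (submatrix_val_mem_SG_deleteVert hM v)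
    _ ≤ M.rank := Matrix.rank_submatrix_le _ _ _
    _ = minRank G := hrank

/-- The bordered matrix `B` is a witness of `mr(G)` if and only if `w` lies in
the null space of the rows of `A` indexed by non-neighbors of `v`, and
`(Aw)ᵢ ≠ 0` for every neighbor `i` of `v`. -/
theorem border_witness_iff {V : Type*} [Fintype V] [DecidableEq V]
    (G : SimpleGraph V) (v : V)
    (A : Matrix {x : V // x ≠ v} {x : V // x ≠ v} ℝ)
    (hA : A ∈ SG (deleteVert G v)) (hrank : A.rank = minRank (deleteVert G v))
    (w : {x : V // x ≠ v} → ℝ) :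
    (border v A w ∈ SG G ∧ (border v A w).rank = minRank G) ↔
      ((∀ x : {x : V // x ≠ v}, ¬ G.Adj v x.val → (A *ᵥ w) x = 0) ∧
        (∀ x : {x : V // x ≠ v}, G.Adj v x.val → (A *ᵥ w) x ≠ 0)) := by
  have hpattern : ((∀ x : {x : V // x ≠ v}, ¬ G.Adj v x.val → (A *ᵥ w) x = 0) ∧
      (∀ x : {x : V // x ≠ v}, G.Adj v x.val → (A *ᵥ w) x ≠ 0)) ↔
      ∀ x : {x : V // x ≠ v}, ((A *ᵥ w) x ≠ 0 ↔ G.Adj v x) := by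
    rw [← forall_and]
    exact forall_congr' fun x => by tauto
  rw [hpattern, ← border_mem_SG_iff v A w hA]
  refine ⟨And.left, fun hB => ⟨hB, le_antisymm ?_ (minRank_le_rank hB)⟩⟩
  rw [rank_border, hrank]
  exact minRank_deleteVert_le G v
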